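/- arXiv:math/0501085 — 2 statements merged into one kernel-verified Lean document; each statement's English description precedes it below -/
import Mathlib

section
/- For each integer i ≥ 1 let (Z, Yᵢ, Hᵢ, Y_{i-1}) be a pre-wreath structure. Let Y be the union of all the Yᵢ and let H be the subgroup of Sym(Z) generated by the union of all the Hᵢ. Then (Z, Y, H, Y₀) is a pre-wreath structure, and its carrier {Y₀h : h ∈ H} equals the union over i ≥ 1 of the families {Y₀h₁h₂⋯hᵢ : h₁ ∈ H₁, h₂ ∈ H₂, …, hᵢ ∈ Hᵢ}. -/
/-- A pre-wreath structure `(Z, Y, H, X)`: `H` is a nontrivial subgroup of `Sym(Z)`,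
`X ⊆ Y ⊆ Z`, `X` nonempty, every element of `H` fixes every point outside `Y`,
if `Xh` meets `X` then `h` is the identity on `X`, and every nontrivial `h ∈ H`
moves some set `Xj` (`j ∈ H`). (Images are written with Lean's left action, so the
set `Xh` of the paper is `⇑h '' X`.) -/
def IsPreWreath {Z : Type*} (Y : Set Z) (H : Subgroup (Equiv.Perm Z)) (X : Set Z) : Prop :=
  H ≠ ⊥ ∧
  (∀ h ∈ H, ∀ z : Z, z ∉ Y → h z = z) ∧
  X ⊆ Y ∧
  X.Nonempty ∧
  (∀ h ∈ H, (⇑h '' X ∩ X).Nonempty → ∀ x ∈ X, h x = x) ∧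
  (∀ h ∈ H, h ≠ 1 → ∃ j ∈ H, ⇑h '' (⇑j '' X) ≠ ⇑j '' X)

/-- The carrier `XH = {Xh : h ∈ H}` of a pre-wreath structure. -/
def wreathCarrier {Z : Type*} (H : Subgroup (Equiv.Perm Z)) (X : Set Z) : Set (Set Z) :=
  {A : Set Z | ∃ h ∈ H, A = ⇑h '' X}

/-- The support of a subgroup of `Sym(Z)`: the points moved by some element. -/
def Supp {Z : Type*} (K : Subgroup (Equiv.Perm Z)) : Set Z :=
  {z : Z | ∃ g ∈ K, g z ≠ z}

/-!
Pre-wreath structures compose: if `(Z, B, G, X)` and `(Z, C, K, B)` are pre-wreath structures,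
so is `(Z, C, G ⊔ K, X)`. Each `k ∈ K` either fixes `B` pointwise or moves it off itself, while
`G` acts inside `B`; hence every element of `G ⊔ K` permutes the `K`-translates of `B` like a
single `p ∈ K`, twisted inside each translate by an element of `G`. An element fixing every
translate of `X` then has `p = 1` by (iii) for `K`, and all its twists are trivial by (iii)
for `G`. Iterating, `H 1 ⊔ ⋯ ⊔ H m` is a pre-wreath structure on `Y m` over `Y 0` whose
elements agree on `Y 0` with products `hₘ ⋯ h₁`, and the group generated by all the `H i` is
the increasing union of these.
-/

section

open Equiv Set

variable {Z : Type*}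

lemma Equiv.Perm.apply_mem_of_mem_fixingSubgroup_compl {B : Set Z} {g : Perm Z}
    (hg : g ∈ fixingSubgroup (Perm Z) Bᶜ) {z : Z} (hz : z ∈ B) : g z ∈ B := by
  by_contra hgz
  have hfix : g (g z) = g z := (mem_fixingSubgroup_iff _).mp hg _ hgz
  exact hgz (by rwa [g.injective hfix])

lemma apply_eq_of_image_image_eq {H : Subgroup (Perm Z)} {X : Set Z} (hX : X.Nonempty)
    (hH : ∀ q ∈ H, (q '' X ∩ X).Nonempty → EqOn q id X) {h j : Perm Z} (hh : h ∈ H)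
    (hj : j ∈ H) (himg : h '' (j '' X) = j '' X) {x : Z} (hx : x ∈ X) : h (j x) = j x := by
  obtain ⟨x₀, hx₀⟩ := hX
  obtain ⟨_, ⟨x₁, hx₁, rfl⟩, hx₁₀⟩ : j x₀ ∈ h '' (j '' X) := himg.symm ▸ mem_image_of_mem j hx₀
  have hconj := hH (j⁻¹ * h * j) (mul_mem (mul_mem (inv_mem hj) hh) hj)
    ⟨x₀, ⟨x₁, hx₁, by simp [hx₁₀]⟩, hx₀⟩ hx
  exact Perm.inv_eq_iff_eq.mp hconj

namespace IsPreWreath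

variable {Y X : Set Z} {H : Subgroup (Perm Z)}

lemma ne_bot (hpw : IsPreWreath Y H X) : H ≠ ⊥ := hpw.1

lemma le_fixingSubgroup (hpw : IsPreWreath Y H X) : H ≤ fixingSubgroup (Perm Z) Yᶜ :=
  fun h hh => (mem_fixingSubgroup_iff _).mpr (hpw.2.1 h hh)

lemma subset (hpw : IsPreWreath Y H X) : X ⊆ Y := hpw.2.2.1

lemma nonempty (hpw : IsPreWreath Y H X) : X.Nonempty := hpw.2.2.2.1

lemma eqOn_id {h : Perm Z} (hpw : IsPreWreath Y H X) (hh : h ∈ H)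
    (hmeet : (h '' X ∩ X).Nonempty) : EqOn h id X :=
  hpw.2.2.2.2.1 h hh hmeet

lemma exists_image_ne {h : Perm Z} (hpw : IsPreWreath Y H X) (hh : h ∈ H) (hne : h ≠ 1) :
    ∃ j ∈ H, h '' (j '' X) ≠ j '' X :=
  hpw.2.2.2.2.2 h hh hne

lemma eq_one_of_forall_apply_eq {h : Perm Z} (hpw : IsPreWreath Y H X) (hh : h ∈ H)
    (hfix : ∀ j ∈ H, ∀ x ∈ X, h (j x) = j x) : h = 1 := by
  by_contra hne
  obtain ⟨j, hj, hmoved⟩ := hpw.exists_image_ne hh hne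
  exact hmoved (by rw [image_image]; exact image_congr (hfix j hj))

end IsPreWreath

section Sup

variable {B : Set Z} {G K : Subgroup (Perm Z)}

/-- `h` permutes the `K`-translates of `B` like `p`, twisted inside each translate by an
element of `G`. -/
def IsBlockwise (B : Set Z) (G K : Subgroup (Perm Z)) (p h : Perm Z) : Prop :=
  (∀ c ∈ K, ∃ w ∈ G, ∀ z ∈ B, h (c z) = p (c (w z))) ∧ ∀ z, (∀ c ∈ K, c z ∉ B) → h z = p z

lemma isBlockwise_one : IsBlockwise B G K 1 1 :=
  ⟨fun _ _ => ⟨1, one_mem _, fun _ _ => rfl⟩, fun _ _ => rfl⟩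

lemma IsBlockwise.mul_left {p h : Perm Z} (hbl : IsBlockwise B G K p h) (a : Perm Z) :
    IsBlockwise B G K (a * p) (a * h) := by
  refine ⟨fun c hc => ?_, fun z hz => congrArg a (hbl.2 z hz)⟩
  obtain ⟨w, hw, hwe⟩ := hbl.1 c hc
  exact ⟨w, hw, fun z hz => congrArg a (hwe z hz)⟩

lemma IsBlockwise.mul_left_of_mem_left (hG : G ≤ fixingSubgroup (Perm Z) Bᶜ)
    (hK : ∀ k ∈ K, (k '' B ∩ B).Nonempty → EqOn k id B) {p h a : Perm Z} (hp : p ∈ K)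
    (hbl : IsBlockwise B G K p h) (ha : a ∈ G) : IsBlockwise B G K p (a * h) := by
  have hGB : ∀ g ∈ G, ∀ z ∈ B, g z ∈ B := fun g hg _ hz =>
    Perm.apply_mem_of_mem_fixingSubgroup_compl (hG hg) hz
  have haB : ∀ z ∉ B, a z = z := (mem_fixingSubgroup_iff _).mp (hG ha)
  refine ⟨fun c hc => ?_, fun z hz => ?_⟩
  · obtain ⟨w, hw, hwe⟩ := hbl.1 c hc
    by_cases hmeet : ((p * c : Perm Z) '' B ∩ B).Nonempty
    · -- the translate `p c B` is `B` itself, on which `p c` is the identity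
      have hid := hK _ (mul_mem hp hc) hmeet
      refine ⟨a * w, mul_mem ha hw, fun z hz => ?_⟩
      have hwz := hGB w hw z hz
      have hpcw : p (c (w z)) = w z := hid hwz
      have hpcaw : p (c (a (w z))) = a (w z) := hid (hGB a ha _ hwz)
      rw [Perm.mul_apply, hwe z hz, hpcw, Perm.mul_apply, hpcaw]
    · refine ⟨w, hw, fun z hz => ?_⟩
      have hout : p (c (w z)) ∉ B := fun hmem => hmeet ⟨_, ⟨w z, hGB w hw z hz, rfl⟩, hmem⟩
      rw [Perm.mul_apply, hwe z hz, haB _ hout]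
  · rw [Perm.mul_apply, hbl.2 z hz, haB _ (hz p hp)]

lemma exists_isBlockwise_of_mem_sup (hG : G ≤ fixingSubgroup (Perm Z) Bᶜ)
    (hK : ∀ k ∈ K, (k '' B ∩ B).Nonempty → EqOn k id B) {h : Perm Z} (hh : h ∈ G ⊔ K) :
    ∃ p ∈ K, IsBlockwise B G K p h := by
  have step : ∀ a ∈ (G : Set (Perm Z)) ∪ K, ∀ h : Perm Z,
      (∃ p ∈ K, IsBlockwise B G K p h) → ∃ p ∈ K, IsBlockwise B G K p (a * h) := by
    rintro a (ha | ha) h ⟨p, hp, hbl⟩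
    · exact ⟨p, hp, hbl.mul_left_of_mem_left hG hK hp ha⟩
    · exact ⟨a * p, mul_mem ha hp, hbl.mul_left a⟩
  rw [Subgroup.sup_eq_closure] at hh
  induction hh using Subgroup.closure_induction_left with
  | one => exact ⟨1, one_mem _, isBlockwise_one⟩
  | mul_left a ha h _ ih => exact step a ha h ih
  | inv_mul_cancel a ha h _ ih => exact step a⁻¹ (ha.imp G.inv_mem K.inv_mem) h ih

lemma exists_eqOn_mul_of_mem_sup (hG : G ≤ fixingSubgroup (Perm Z) Bᶜ)
    (hK : ∀ k ∈ K, (k '' B ∩ B).Nonempty → EqOn k id B) {h : Perm Z} (hh : h ∈ G ⊔ K) :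
    ∃ p ∈ K, ∃ w ∈ G, EqOn h (p * w) B := by
  obtain ⟨p, hp, hbl⟩ := exists_isBlockwise_of_mem_sup hG hK hh
  obtain ⟨w, hw, hwe⟩ := hbl.1 1 (one_mem _)
  exact ⟨p, hp, w, hw, hwe⟩

end Sup

namespace IsPreWreath

variable {X B C : Set Z} {G K : Subgroup (Perm Z)}

lemma eqOn_id_of_mem_sup (hG : IsPreWreath B G X) (hK : IsPreWreath C K B) {h : Perm Z}
    (hh : h ∈ G ⊔ K) (hmeet : (h '' X ∩ X).Nonempty) : EqOn h id X := by
  obtain ⟨p, hp, w, hw, hpw⟩ :=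
    exists_eqOn_mul_of_mem_sup hG.le_fixingSubgroup (fun k hk => hK.eqOn_id hk) hh
  have hwB : ∀ x ∈ X, w x ∈ B := fun x hx =>
    Perm.apply_mem_of_mem_fixingSubgroup_compl (hG.le_fixingSubgroup hw) (hG.subset hx)
  obtain ⟨_, ⟨x, hx, rfl⟩, hhx⟩ := hmeet
  have hpB : EqOn p id B :=
    hK.eqOn_id hp ⟨h x, ⟨w x, hwB x hx, (hpw (hG.subset hx)).symm⟩, hG.subset hhx⟩
  have hhw : EqOn h w X := fun y hy => (hpw (hG.subset hy)).trans (hpB (hwB y hy))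
  have hwX : EqOn w id X := hG.eqOn_id hw ⟨w x, ⟨x, hx, rfl⟩, hhw hx ▸ hhx⟩
  exact hhw.trans hwX

lemma eq_one_of_mem_sup (hG : IsPreWreath B G X) (hK : IsPreWreath C K B) {h : Perm Z}
    (hh : h ∈ G ⊔ K) (hfix : ∀ j ∈ G ⊔ K, ∀ x ∈ X, h (j x) = j x) : h = 1 := by
  have hGB : ∀ g ∈ G, ∀ z ∈ B, g z ∈ B := fun g hg _ hz =>
    Perm.apply_mem_of_mem_fixingSubgroup_compl (hG.le_fixingSubgroup hg) hz
  obtain ⟨p, hp, hblock, hout⟩ :=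
    exists_isBlockwise_of_mem_sup hG.le_fixingSubgroup (fun k hk => hK.eqOn_id hk) hh
  obtain ⟨y₀, hy₀⟩ := hG.nonempty
  have hp1 : p = 1 := by
    refine hK.eq_one_of_forall_apply_eq hp fun c hc => ?_
    obtain ⟨w, hw, hwe⟩ := hblock c hc
    -- `c⁻¹ p c` maps the point `w y₀` of `B` to the point `y₀` of `B`
    have hconj : EqOn (c⁻¹ * p * c) id B := by
      refine hK.eqOn_id (mul_mem (mul_mem (inv_mem hc) hp) hc)
        ⟨y₀, ⟨w y₀, hGB w hw y₀ (hG.subset hy₀), ?_⟩, hG.subset hy₀⟩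
      exact Perm.inv_eq_iff_eq.mpr
        ((hwe y₀ (hG.subset hy₀)).symm.trans (hfix c (Subgroup.mem_sup_right hc) y₀ hy₀))
    exact fun z hz => Perm.inv_eq_iff_eq.mp (hconj hz)
  subst hp1
  have hblock' : ∀ c ∈ K, ∀ z ∈ B, h (c z) = c z := by
    intro c hc
    obtain ⟨w, hw, hwe⟩ := hblock c hc
    have hw1 : w = 1 := hG.eq_one_of_forall_apply_eq hw fun g hg x hx => c.injective <|
      (hwe _ (hGB g hg x (hG.subset hx))).symm.trans
        (hfix (c * g) (mul_mem (Subgroup.mem_sup_right hc) (Subgroup.mem_sup_left hg)) x hx)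
    subst hw1
    exact hwe
  ext z
  by_cases hz : ∃ c ∈ K, c z ∈ B
  · obtain ⟨c, hc, hcz⟩ := hz
    simpa using hblock' c⁻¹ (inv_mem hc) (c z) hcz
  · push Not at hz
    exact hout z hz

theorem sup (hG : IsPreWreath B G X) (hK : IsPreWreath C K B) : IsPreWreath C (G ⊔ K) X := by
  refine ⟨?_, ?_, hG.subset.trans hK.subset, hG.nonempty, ?_, ?_⟩
  · exact ne_bot_of_le_ne_bot hG.ne_bot le_sup_left
  · intro h hh
    have hle : G ⊔ K ≤ fixingSubgroup (Perm Z) Cᶜ := sup_le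
      (hG.le_fixingSubgroup.trans (fixingSubgroup_antitone _ _ (compl_subset_compl.mpr hK.subset)))
      hK.le_fixingSubgroup
    exact (mem_fixingSubgroup_iff _).mp (hle hh)
  · exact fun h hh => hG.eqOn_id_of_mem_sup hK hh
  · intro h hh hne
    by_contra! himg
    exact hne (hG.eq_one_of_mem_sup hK hh fun j hj x hx =>
      apply_eq_of_image_image_eq hG.nonempty (fun q hq => hG.eqOn_id_of_mem_sup hK hq) hh hj
        (himg j hj) hx)

end IsPreWreath

lemma IsPreWreath.of_forall_exists_mem {ι : Type*} [Nonempty ι] {Y : ι → Set Z}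
    {G : ι → Subgroup (Perm Z)} {X Y' : Set Z} {G' : Subgroup (Perm Z)}
    (hpw : ∀ i, IsPreWreath (Y i) (G i) X) (hY : ∀ i, Y i ⊆ Y') (hG : ∀ i, G i ≤ G')
    (hG' : ∀ h ∈ G', ∃ i, h ∈ G i) : IsPreWreath Y' G' X := by
  obtain ⟨i₀⟩ := ‹Nonempty ι›
  refine ⟨ne_bot_of_le_ne_bot (hpw i₀).ne_bot (hG i₀), fun h hh z hz => ?_,
    (hpw i₀).subset.trans (hY i₀), (hpw i₀).nonempty, fun h hh => ?_, fun h hh hne => ?_⟩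
  all_goals obtain ⟨i, hi⟩ := hG' h hh
  · exact (mem_fixingSubgroup_iff _).mp ((hpw i).le_fixingSubgroup hi) z fun hzi => hz (hY i hzi)
  · exact (hpw i).eqOn_id hi
  · obtain ⟨j, hj, hmoved⟩ := (hpw i).exists_image_ne hi hne
    exact ⟨j, hG i hj, hmoved⟩

/-- `descProd g m = g m * ⋯ * g 2 * g 1`. -/
def descProd (g : ℕ → Perm Z) (m : ℕ) : Perm Z :=
  ((List.range' 1 m).reverse.map g).prod

lemma descProd_succ (g : ℕ → Perm Z) (m : ℕ) : descProd g (m + 1) = g (m + 1) * descProd g m := by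
  simp [descProd, List.range'_concat, add_comm]

lemma descProd_congr {g g' : ℕ → Perm Z} {m : ℕ} (h : ∀ k, 1 ≤ k → k ≤ m → g k = g' k) :
    descProd g m = descProd g' m := by
  unfold descProd
  congr 1
  refine List.map_congr_left fun k hk => ?_
  rw [List.mem_reverse, List.mem_range'_1] at hk
  exact h k hk.1 (by omega)

def supUpTo (H : ℕ → Subgroup (Perm Z)) : ℕ → Subgroup (Perm Z)
  | 0 => ⊥
  | m + 1 => supUpTo H m ⊔ H (m + 1)

section Chain

variable {Y : ℕ → Set Z} {H : ℕ → Subgroup (Perm Z)}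

lemma supUpTo_mono : Monotone (supUpTo H) :=
  monotone_nat_of_le_succ fun _ => le_sup_left

lemma supUpTo_le_closure (m : ℕ) :
    supUpTo H m ≤ Subgroup.closure (⋃ i ∈ {i : ℕ | 1 ≤ i}, (H i : Set (Perm Z))) := by
  induction m with
  | zero => exact bot_le
  | succ m ih =>
    exact sup_le ih fun h hh => Subgroup.subset_closure (mem_biUnion (by simp) hh)

lemma exists_mem_supUpTo_of_mem_closure {h : Perm Z}
    (hh : h ∈ Subgroup.closure (⋃ i ∈ {i : ℕ | 1 ≤ i}, (H i : Set (Perm Z)))) :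
    ∃ m, h ∈ supUpTo H (m + 1) := by
  induction hh using Subgroup.closure_induction with
  | mem h hh =>
    simp only [mem_ofPred_eq, mem_iUnion, SetLike.mem_coe, exists_prop] at hh
    obtain ⟨i, hi, hh⟩ := hh
    obtain ⟨m, rfl⟩ : ∃ m, i = m + 1 := ⟨i - 1, by omega⟩
    exact ⟨m, le_sup_right (a := supUpTo H m) hh⟩
  | one => exact ⟨0, one_mem _⟩
  | mul _ _ _ _ ih₁ ih₂ =>
    obtain ⟨m₁, h₁⟩ := ih₁
    obtain ⟨m₂, h₂⟩ := ih₂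
    exact ⟨max m₁ m₂, mul_mem (supUpTo_mono (by omega) h₁) (supUpTo_mono (by omega) h₂)⟩
  | inv _ _ ih =>
    obtain ⟨m, hm⟩ := ih
    exact ⟨m, inv_mem hm⟩

lemma isPreWreath_succ (hpw : ∀ i : ℕ, 1 ≤ i → IsPreWreath (Y i) (H i) (Y (i - 1))) (m : ℕ) :
    IsPreWreath (Y (m + 1)) (H (m + 1)) (Y m) :=
  hpw (m + 1) (by omega)

lemma zero_subset_of_isPreWreath
    (hpw : ∀ i : ℕ, 1 ≤ i → IsPreWreath (Y i) (H i) (Y (i - 1))) (m : ℕ) : Y 0 ⊆ Y m := by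
  induction m with
  | zero => exact subset_rfl
  | succ m ih => exact ih.trans (isPreWreath_succ hpw m).subset

lemma supUpTo_le_fixingSubgroup (hpw : ∀ i : ℕ, 1 ≤ i → IsPreWreath (Y i) (H i) (Y (i - 1)))
    (m : ℕ) : supUpTo H m ≤ fixingSubgroup (Perm Z) (Y m)ᶜ := by
  induction m with
  | zero => exact bot_le
  | succ m ih =>
    have hstep := isPreWreath_succ hpw m
    exact sup_le (ih.trans (fixingSubgroup_antitone _ _ (compl_subset_compl.mpr hstep.subset)))
      hstep.le_fixingSubgroup

lemma isPreWreath_supUpTo (hpw : ∀ i : ℕ, 1 ≤ i → IsPreWreath (Y i) (H i) (Y (i - 1)))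
    (m : ℕ) : IsPreWreath (Y (m + 1)) (supUpTo H (m + 1)) (Y 0) := by
  induction m with
  | zero => simpa [supUpTo] using isPreWreath_succ hpw 0
  | succ m ih => exact ih.sup (isPreWreath_succ hpw (m + 1))

lemma exists_eqOn_descProd (hpw : ∀ i : ℕ, 1 ≤ i → IsPreWreath (Y i) (H i) (Y (i - 1)))
    (m : ℕ) {h : Perm Z} (hh : h ∈ supUpTo H m) :
    ∃ g : ℕ → Perm Z, (∀ k, 1 ≤ k → k ≤ m → g k ∈ H k) ∧ EqOn h (descProd g m) (Y 0) := by
  induction m generalizing h with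
  | zero =>
    rw [Subgroup.mem_bot.mp hh]
    exact ⟨fun _ => 1, fun k hk hkm => by omega, fun _ _ => rfl⟩
  | succ m ih =>
    obtain ⟨p, hp, w, hw, heq⟩ := exists_eqOn_mul_of_mem_sup (supUpTo_le_fixingSubgroup hpw m)
      (fun k hk => (isPreWreath_succ hpw m).eqOn_id hk) hh
    obtain ⟨g, hg, hwg⟩ := ih hw
    refine ⟨Function.update g (m + 1) p, fun k hk hkm => ?_, fun x hx => ?_⟩
    · rcases eq_or_lt_of_le hkm with rfl | hlt
      · rwa [Function.update_self]
      · rw [Function.update_of_ne hlt.ne]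
        exact hg k hk (by omega)
    · have hprefix : descProd (Function.update g (m + 1) p) m = descProd g m :=
        descProd_congr fun k _ hkm => Function.update_of_ne (by omega) _ _
      rw [heq (zero_subset_of_isPreWreath hpw m hx), descProd_succ, Function.update_self,
        hprefix, Perm.mul_apply, Perm.mul_apply, hwg hx]

end Chain

end

/-- Given pre-wreath structures `(Z, Yᵢ, Hᵢ, Y_{i-1})` for all `i ≥ 1`,
let `Y` be the union of the `Yᵢ` and `H` the subgroup generated by all the `Hᵢ`.  Then
`(Z, Y, H, Y₀)` is a pre-wreath structure, and its carrier is the union over `i ≥ 1` of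
the families `{Y₀h₁h₂⋯hᵢ : hₖ ∈ Hₖ}` (apply `h₁` first, …, `hᵢ` last; the composite is
the product `hᵢ ⋯ h₂ h₁` of permutations acting on the left). -/
theorem stmt11 {Z : Type*} (Y : ℕ → Set Z) (H : ℕ → Subgroup (Equiv.Perm Z))
    (hpw : ∀ i : ℕ, 1 ≤ i → IsPreWreath (Y i) (H i) (Y (i - 1))) :
    IsPreWreath (⋃ i ∈ {i : ℕ | 1 ≤ i}, Y i)
      (Subgroup.closure (⋃ i ∈ {i : ℕ | 1 ≤ i}, (H i : Set (Equiv.Perm Z)))) (Y 0) ∧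
    wreathCarrier
        (Subgroup.closure (⋃ i ∈ {i : ℕ | 1 ≤ i}, (H i : Set (Equiv.Perm Z)))) (Y 0)
      = {A : Set Z | ∃ i : ℕ, 1 ≤ i ∧ ∃ g : ℕ → Equiv.Perm Z,
          (∀ k : ℕ, 1 ≤ k → k ≤ i → g k ∈ H k) ∧
          A = ⇑(((List.range' 1 i).reverse.map g).prod) '' Y 0} := by
  refine ⟨IsPreWreath.of_forall_exists_mem (isPreWreath_supUpTo hpw)
    (fun m => Set.subset_biUnion_of_mem (u := Y) (show 1 ≤ m + 1 by omega))
    (fun m => supUpTo_le_closure (m + 1)) fun h hh => exists_mem_supUpTo_of_mem_closure hh, ?_⟩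
  ext A
  constructor
  · rintro ⟨h, hh, rfl⟩
    obtain ⟨m, hm⟩ := exists_mem_supUpTo_of_mem_closure hh
    obtain ⟨g, hg, hgh⟩ := exists_eqOn_descProd hpw (m + 1) hm
    exact ⟨m + 1, by omega, g, hg, hgh.image_eq⟩
  · rintro ⟨i, -, g, hg, rfl⟩
    refine ⟨_, list_prod_mem ?_, rfl⟩
    simp only [List.mem_map, List.mem_reverse, List.mem_range'_1]
    rintro _ ⟨k, ⟨hk, hki⟩, rfl⟩
    exact Subgroup.subset_closure (Set.mem_biUnion hk (hg k hk (by omega)))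
end

section
/- Assume the inductive setting, with f an element of Sym(Z), and let V be the subgroup of Sym(Z) generated by H₁ together with f. Then V equals the subgroup generated by M ∪ {f}, M is a normal subgroup of V, every element of V can be written as fⁿ·m with n ∈ ℤ and m ∈ M, the intersection of M with the cyclic subgroup ⟨f⟩ is trivial, and f has infinite order; thus V is the internal semidirect product of M with the infinite cyclic group generated by f. -/
/-- The inductive setting: `(Z, fY₀, H₁, Y₀)` is a pre-wreath structure (`Y₁ = Y₀f` is
the image of `Y₀` under the bijection `f`), `Y₀ ⊆ Supp(H₁) ⊆ Y₁` with `Supp(H₁) ≠ Y₁`,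
and `W₀` is a nonempty subset of `Y₀` whose image under `f` misses `Supp(H₁)`. -/
def InductiveSetting {Z : Type*} (H₁ : Subgroup (Equiv.Perm Z)) (f : Equiv.Perm Z)
    (Y₀ W₀ : Set Z) : Prop :=
  IsPreWreath (⇑f '' Y₀) H₁ Y₀ ∧
  Y₀ ⊆ Supp H₁ ∧ Supp H₁ ⊆ ⇑f '' Y₀ ∧ Supp H₁ ≠ ⇑f '' Y₀ ∧
  W₀.Nonempty ∧ W₀ ⊆ Y₀ ∧ (⇑f '' W₀) ∩ Supp H₁ = ∅

/-- `Hᵢ`, the conjugate of `H₁` carried over by `f^(i-1)`: this is the paper's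
`f^{-(i-1)} H₁ f^{i-1}` written in right-action notation, i.e. the subgroup
`{f^(i-1) h f^(-(i-1)) : h ∈ H₁}` of permutations acting on the left. -/
def Hseq {Z : Type*} (H₁ : Subgroup (Equiv.Perm Z)) (f : Equiv.Perm Z) (i : ℤ) :
    Subgroup (Equiv.Perm Z) :=
  Subgroup.map (MulAut.conj (f ^ (i - 1))).toMonoidHom H₁

/-- `R_j`, the subgroup generated by the `Hᵢ` with `i ≥ j`. -/
def Rseq {Z : Type*} (H₁ : Subgroup (Equiv.Perm Z)) (f : Equiv.Perm Z) (j : ℤ) :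
    Subgroup (Equiv.Perm Z) :=
  Subgroup.closure (⋃ i ∈ {i : ℤ | j ≤ i}, (Hseq H₁ f i : Set (Equiv.Perm Z)))

/-- `Lᵢ`, the subgroup generated by the `H_j` with `j < i`. -/
def Lseq {Z : Type*} (H₁ : Subgroup (Equiv.Perm Z)) (f : Equiv.Perm Z) (i : ℤ) :
    Subgroup (Equiv.Perm Z) :=
  Subgroup.closure (⋃ j ∈ {j : ℤ | j < i}, (Hseq H₁ f j : Set (Equiv.Perm Z)))

/-- `M`, the subgroup generated by all the `Hᵢ`, `i ∈ ℤ`. -/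
def Mgrp {Z : Type*} (H₁ : Subgroup (Equiv.Perm Z)) (f : Equiv.Perm Z) :
    Subgroup (Equiv.Perm Z) :=
  Subgroup.closure (⋃ i : ℤ, (Hseq H₁ f i : Set (Equiv.Perm Z)))

/-- `Wᵢ = W₀fⁱ`, the image of `W₀` under the `i`-th power of `f`. -/
def Wseq {Z : Type*} (W₀ : Set Z) (f : Equiv.Perm Z) (i : ℤ) : Set Z :=
  ⇑(f ^ i) '' W₀

/-!
Conjugation by `f` shifts `Hᵢ` to `Hᵢ₊₁`, so `f` normalizes `M`, and `⟨H₁, f⟩ = ⟨M, f⟩ = ⟨f⟩ M`.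
For `M ∩ ⟨f⟩ = 1`, put `S = Supp(H₁)`. Then `Hᵢ` is supported on `Sf^{i-1}`, and
`S ⊆ Sf` while `W₀f` misses `S`, so `Wₖ` misses `Sfⁱ` whenever `i < k`. Hence every element
of `M` fixes `Wₖ` pointwise for all large `k`. No positive power `fⁿ` fixes a point of any `Wₖ`:
such a point would lie in `Wₙ₊ₖ ∩ Sfᵏ = ∅`.
-/

open Subgroup Filter Equiv

def eventualFixingSubgroup {Z ι : Type*} (l : Filter ι) (T : ι → Set Z) :
    Subgroup (Perm Z) where
  carrier := {g | ∀ᶠ k in l, g ∈ fixingSubgroup (Perm Z) (T k)}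
  one_mem' := .of_forall fun _ => one_mem _
  mul_mem' ha hb := (ha.and hb).mono fun _ h => mul_mem h.1 h.2
  inv_mem' ha := ha.mono fun _ h => inv_mem h

section PermImage

variable {Z : Type*} (f : Perm Z) {S W : Set Z}

theorem apply_eq_of_notMem_Supp {K : Subgroup (Perm Z)} {g : Perm Z} (hg : g ∈ K) {z : Z}
    (hz : z ∉ Supp K) : g z = z :=
  not_not.1 fun h => hz ⟨g, hg, h⟩

theorem conj_apply_eq_of_notMem_image_Supp {K : Subgroup (Perm Z)} {g : Perm Z} (hg : g ∈ K)
    {z : Z} (hz : z ∉ f '' Supp K) : (f * g * f⁻¹) z = z := by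
  have hz' : f⁻¹ z ∉ Supp K := fun h => hz ⟨f⁻¹ z, h, f.apply_symm_apply z⟩
  rw [Perm.mul_apply, Perm.mul_apply, apply_eq_of_notMem_Supp hg hz']
  exact f.apply_symm_apply z

theorem monotone_zpow_image (hS : S ⊆ f '' S) : Monotone fun n : ℤ => ⇑(f ^ n) '' S :=
  monotone_int_of_le_succ fun n => by
    simp only [zpow_add_one, Perm.coe_mul, Set.image_comp]
    exact Set.image_mono hS

theorem disjoint_zpow_image (hS : S ⊆ f '' S) (hW : Disjoint (f '' W) S) {i j : ℤ}
    (hij : i < j) : Disjoint (⇑(f ^ j) '' W) (⇑(f ^ i) '' S) := by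
  have hj : ⇑(f ^ j) '' W = ⇑(f ^ (j - 1)) '' (f '' W) := by
    rw [← Set.image_comp, ← Perm.coe_mul, ← zpow_add_one, sub_add_cancel]
  rw [hj]
  refine Disjoint.mono_right (monotone_zpow_image f hS (by omega : i ≤ j - 1)) ?_
  exact (Set.disjoint_image_iff (f ^ (j - 1)).injective).2 hW

end PermImage

section Mgrp

variable {Z : Type*} (H₁ : Subgroup (Perm Z)) (f : Perm Z)

theorem mem_Hseq {i : ℤ} {x : Perm Z} :
    x ∈ Hseq H₁ f i ↔ ∃ h ∈ H₁, f ^ (i - 1) * h * (f ^ (i - 1))⁻¹ = x := by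
  simp only [Hseq, Subgroup.mem_map, MulEquiv.coe_toMonoidHom, MulAut.conj_apply]

theorem Hseq_le_Mgrp (i : ℤ) : Hseq H₁ f i ≤ Mgrp H₁ f :=
  fun _ hx => subset_closure (Set.mem_iUnion.2 ⟨i, hx⟩)

theorem le_Mgrp : H₁ ≤ Mgrp H₁ f :=
  fun h hh => Hseq_le_Mgrp H₁ f 1 ((mem_Hseq H₁ f).2 ⟨h, hh, by simp⟩)

theorem Mgrp_le_sup_zpowers : Mgrp H₁ f ≤ H₁ ⊔ zpowers f := by
  refine closure_le _ |>.2 <| Set.iUnion_subset fun i x hx => ?_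
  obtain ⟨h, hh, rfl⟩ := (mem_Hseq H₁ f).1 hx
  have hf : f ^ (i - 1) ∈ H₁ ⊔ zpowers f := mem_sup_right (zpow_mem (mem_zpowers f) _)
  exact mul_mem (mul_mem hf (mem_sup_left hh)) (inv_mem hf)

theorem zpow_mul_mul_inv_mem_Hseq {i : ℤ} {x : Perm Z} (hx : x ∈ Hseq H₁ f i) (c : ℤ) :
    f ^ c * x * (f ^ c)⁻¹ ∈ Hseq H₁ f (i + c) := by
  obtain ⟨h, hh, rfl⟩ := (mem_Hseq H₁ f).1 hx
  exact (mem_Hseq H₁ f).2 ⟨h, hh, by group⟩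

theorem zpowers_le_normalizer_Mgrp : zpowers f ≤ normalizer (Mgrp H₁ f : Set (Perm Z)) := by
  refine le_normalizer_closure_iff.2 fun g hg x hx => ?_
  obtain ⟨c, rfl⟩ := mem_zpowers_iff.1 hg
  obtain ⟨i, hi⟩ := Set.mem_iUnion.1 hx
  exact Hseq_le_Mgrp H₁ f (i + c) (zpow_mul_mul_inv_mem_Hseq H₁ f hi c)

variable {W₀ : Set Z}

theorem Mgrp_le_eventualFixingSubgroup (hS : Supp H₁ ⊆ f '' Supp H₁)
    (hW₀ : Disjoint (f '' W₀) (Supp H₁)) :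
    Mgrp H₁ f ≤ eventualFixingSubgroup atTop fun k : ℤ => ⇑(f ^ k) '' W₀ := by
  refine closure_le _ |>.2 <| Set.iUnion_subset fun i x hx => ?_
  obtain ⟨h, hh, rfl⟩ := (mem_Hseq H₁ f).1 hx
  filter_upwards [eventually_ge_atTop i] with k hik
  refine (mem_fixingSubgroup_iff _).2 fun z hz => conj_apply_eq_of_notMem_image_Supp _ hh ?_
  exact Set.disjoint_left.1 (disjoint_zpow_image f hS hW₀ (by omega : i - 1 < k)) hz

theorem zpow_notMem_eventualFixingSubgroup {S : Set Z} (hS : S ⊆ f '' S)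
    (hW₀ : Disjoint (f '' W₀) S) (hW₀S : W₀ ⊆ S) (hW₀ne : W₀.Nonempty) {n : ℤ} (hn : 0 < n) :
    f ^ n ∉ eventualFixingSubgroup atTop fun k : ℤ => ⇑(f ^ k) '' W₀ := by
  intro hfix
  obtain ⟨k, hk⟩ := Eventually.exists (f := atTop) hfix
  obtain ⟨w, hw⟩ := hW₀ne
  have hmoved : (f ^ n) ((f ^ k) w) ∈ ⇑(f ^ (k + n)) '' W₀ :=
    ⟨w, hw, by rw [add_comm, zpow_add, Perm.mul_apply]⟩
  have hfixed : (f ^ n) ((f ^ k) w) = (f ^ k) w := (mem_fixingSubgroup_iff _).1 hk _ ⟨w, hw, rfl⟩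
  rw [hfixed] at hmoved
  exact Set.disjoint_left.1 (disjoint_zpow_image f hS hW₀ (by omega : k < k + n)) hmoved
    ⟨w, hW₀S hw, rfl⟩

theorem zpow_mem_Mgrp_iff (hS : Supp H₁ ⊆ f '' Supp H₁) (hW₀ : Disjoint (f '' W₀) (Supp H₁))
    (hW₀S : W₀ ⊆ Supp H₁) (hW₀ne : W₀.Nonempty) (n : ℤ) : f ^ n ∈ Mgrp H₁ f ↔ n = 0 := by
  have hnotMem {n : ℤ} (hn : 0 < n) : f ^ n ∉ Mgrp H₁ f := fun h =>
    zpow_notMem_eventualFixingSubgroup f hS hW₀ hW₀S hW₀ne hn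
      (Mgrp_le_eventualFixingSubgroup H₁ f hS hW₀ h)
  refine ⟨fun hn => ?_, fun h => by simp [h]⟩
  rcases lt_trichotomy n 0 with hneg | hzero | hpos
  · exact absurd (by simpa using inv_mem hn) (hnotMem (neg_pos.2 hneg))
  · exact hzero
  · exact absurd hn (hnotMem hpos)

theorem sup_zpowers_eq_Mgrp_sup_zpowers : H₁ ⊔ zpowers f = Mgrp H₁ f ⊔ zpowers f :=
  le_antisymm (sup_le_sup_right (le_Mgrp H₁ f) _) (sup_le (Mgrp_le_sup_zpowers H₁ f) le_sup_right)

end Mgrp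

/-- In the inductive setting, with `V = ⟨H₁, f⟩`: `V = ⟨M, f⟩`, `M` is
a normal subgroup of `V`, every element of `V` is `fⁿ·m` with `n ∈ ℤ`, `m ∈ M`,
`M ∩ ⟨f⟩ = 1`, and `f` has infinite order; thus `V` is the internal semidirect product
of `M` with the infinite cyclic group generated by `f`. -/
theorem stmt14 {Z : Type*} (H₁ : Subgroup (Equiv.Perm Z)) (f : Equiv.Perm Z)
    (Y₀ W₀ : Set Z) (hsetting : InductiveSetting H₁ f Y₀ W₀) :
    H₁ ⊔ Subgroup.zpowers f = Mgrp H₁ f ⊔ Subgroup.zpowers f ∧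
    Mgrp H₁ f ≤ H₁ ⊔ Subgroup.zpowers f ∧
    (∀ v ∈ H₁ ⊔ Subgroup.zpowers f, ∀ m ∈ Mgrp H₁ f, v * m * v⁻¹ ∈ Mgrp H₁ f) ∧
    (∀ v ∈ H₁ ⊔ Subgroup.zpowers f, ∃ n : ℤ, ∃ m ∈ Mgrp H₁ f, v = f ^ n * m) ∧
    Mgrp H₁ f ⊓ Subgroup.zpowers f = ⊥ ∧
    ¬ IsOfFinOrder f := by
  obtain ⟨-, hY₀S, hSY₁, -, hW₀ne, hW₀Y₀, hW₀⟩ := hsetting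
  rw [← Set.disjoint_iff_inter_eq_empty] at hW₀
  have hS : Supp H₁ ⊆ f '' Supp H₁ := hSY₁.trans (Set.image_mono hY₀S)
  have hzpow := zpow_mem_Mgrp_iff H₁ f hS hW₀ (hW₀Y₀.trans hY₀S) hW₀ne
  have hV := sup_zpowers_eq_Mgrp_sup_zpowers H₁ f
  have hnorm := zpowers_le_normalizer_Mgrp H₁ f
  refine ⟨hV, Mgrp_le_sup_zpowers H₁ f, fun v hv m hm => ?_, fun v hv => ?_, ?_, ?_⟩
  · rw [hV] at hv
    exact (sup_le le_normalizer hnorm hv m).1 hm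
  · rw [hV, sup_comm, ← SetLike.mem_coe, coe_mul_of_left_le_normalizer_right _ _ hnorm] at hv
    obtain ⟨_, hg, m, hm, rfl⟩ := hv
    obtain ⟨n, rfl⟩ := mem_zpowers_iff.1 hg
    exact ⟨n, m, hm, rfl⟩
  · refine (eq_bot_iff_forall _).2 fun x ⟨hxM, hxf⟩ => ?_
    obtain ⟨n, rfl⟩ := mem_zpowers_iff.1 hxf
    rw [(hzpow n).1 hxM, zpow_zero]
  · intro hfin
    obtain ⟨n, hn, hfn⟩ := isOfFinOrder_iff_zpow_eq_one.1 hfin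
    exact hn ((hzpow n).1 (hfn ▸ one_mem _))
end
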